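/- arXiv:math/0212281 — 3 statements merged into one kernel-verified Lean document; each statement's English description precedes it below -/
import Mathlib

section
/- Let q > q₀ > 3 and y ∈ (0, 1), and set ȳ = 1 − y. Then R₁(y) := (1 − y^{q−1} − ȳ^{q−1})/(q − 1) − (ȳ^{q₀−1} − ȳ^{q−1})/(q − q₀) ≥ 0, provided additionally q − q₀ < 1. -/
/-- Superadditivity of `x ^ r` for `r ≥ 1` on nonnegative reals. -/
lemma rpow_superadd {a b r : ℝ} (ha : 0 ≤ a) (hb : 0 ≤ b) (hr : 1 ≤ r) :
    a ^ r + b ^ r ≤ (a + b) ^ r := by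
  have h := NNReal.add_rpow_le_rpow_add ⟨a, ha⟩ ⟨b, hb⟩ hr
  have h2 := (NNReal.coe_le_coe).2 h
  exact h2

/-- Key inequality: for `a > 0`, `b ≥ 0` and `p ≥ 2`,
`a ^ p + b ^ p + p * b * a ^ (p - 1) ≤ (a + b) ^ p`. -/
lemma key_ineq {a b p : ℝ} (ha : 0 < a) (hb : 0 ≤ b) (hp : 2 ≤ p) :
    a ^ p + b ^ p + p * b * a ^ (p - 1) ≤ (a + b) ^ p := by
  rcases eq_or_lt_of_le hb with h | hb0
  · simp [← h, Real.zero_rpow (by positivity : p ≠ 0)]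
  set F : ℝ → ℝ := fun t => (a + t) ^ p - t ^ p - p * a ^ (p - 1) * t with hF
  have hderiv : ∀ t ∈ Set.Icc (0:ℝ) b, HasDerivAt F
      (p * (a + t) ^ (p - 1) - p * t ^ (p - 1) - p * a ^ (p - 1)) t := by
    intro t ht
    have h1 : HasDerivAt (fun t : ℝ => (a + t) ^ p) (1 * p * (a + t) ^ (p - 1)) t :=
      HasDerivAt.rpow_const ((hasDerivAt_id t).const_add a)
        (Or.inl (ne_of_gt (by linarith [ht.1])))
    have h2 : HasDerivAt (fun t : ℝ => t ^ p) (p * t ^ (p - 1)) t :=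
      Real.hasDerivAt_rpow_const (Or.inr (by linarith))
    have h3 : HasDerivAt (fun t : ℝ => p * a ^ (p - 1) * t) (p * a ^ (p - 1)) t := by
      simpa using (hasDerivAt_id t).const_mul (p * a ^ (p - 1))
    have h4 := (h1.sub h2).sub h3
    refine h4.congr_deriv ?_
    ring
  have hmono : MonotoneOn F (Set.Icc (0:ℝ) b) := by
    apply monotoneOn_of_deriv_nonneg (convex_Icc 0 b)
    · exact fun t ht => ((hderiv t ht).continuousAt).continuousWithinAt
    · intro t ht
      rw [interior_Icc] at ht
      exact ((hderiv t ⟨ht.1.le, ht.2.le⟩).differentiableAt).differentiableWithinAt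
    · intro t ht
      rw [interior_Icc] at ht
      rw [(hderiv t ⟨ht.1.le, ht.2.le⟩).deriv]
      have hsup := rpow_superadd ha.le ht.1.le (by linarith : (1:ℝ) ≤ p - 1)
      nlinarith
  have h0b : F 0 ≤ F b := hmono (Set.left_mem_Icc.2 hb) (Set.right_mem_Icc.2 hb) hb
  have hF0 : F 0 = a ^ p := by
    simp [hF, Real.zero_rpow (by positivity : p ≠ 0)]
  rw [hF0] at h0b
  simp only [hF] at h0b
  nlinarith [h0b]

theorem stmt_7 (q q₀ y : ℝ) (hq₀ : 3 < q₀) (hqq₀ : q₀ < q) (hgap : q - q₀ < 1)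
    (hy0 : 0 < y) (hy1 : y < 1) :
    0 ≤ (1 - y ^ (q - 1) - (1 - y) ^ (q - 1)) / (q - 1) -
        ((1 - y) ^ (q₀ - 1) - (1 - y) ^ (q - 1)) / (q - q₀) := by
  set z := 1 - y with hz
  have hz0 : 0 < z := by rw [hz]; linarith
  set p := q - 1 with hp
  set δ := q - q₀ with hδ
  have hδ0 : 0 < δ := by rw [hδ]; linarith
  have hδ1 : δ < 1 := hgap
  have hp2 : 2 < p := by rw [hp]; linarith
  -- z^p = z^(p-1) * z
  have hsplit : z ^ p = z ^ (p - 1) * z := by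
    rw [← Real.rpow_add_one (ne_of_gt hz0) (p - 1)]
    norm_num
  -- Step A: weighted AM-GM gives z^(q₀-1) ≤ δ * z^(p-1) + (1-δ) * z^p
  have hgm : z ^ (q₀ - 1) ≤ δ * z ^ (p - 1) + (1 - δ) * z ^ p := by
    have h := Real.geom_mean_le_arith_mean2_weighted hδ0.le (by linarith : (0:ℝ) ≤ 1 - δ)
      (Real.rpow_nonneg hz0.le (p - 1)) (Real.rpow_nonneg hz0.le p) (by ring)
    calc z ^ (q₀ - 1) = (z ^ (p - 1)) ^ δ * (z ^ p) ^ (1 - δ) := by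
          rw [← Real.rpow_mul hz0.le, ← Real.rpow_mul hz0.le, ← Real.rpow_add hz0]
          congr 1
          rw [hp, hδ]; ring
      _ ≤ δ * z ^ (p - 1) + (1 - δ) * z ^ p := h
  -- Step B: key inequality with a = z, b = y
  have hkey := key_ineq hz0 hy0.le hp2.le
  have hone : z + y = 1 := by rw [hz]; ring
  rw [hone, Real.one_rpow] at hkey
  -- combine
  have hzp1 : 0 ≤ z ^ (p - 1) := Real.rpow_nonneg hz0.le _
  have h1 : (z ^ (q₀ - 1) - z ^ p) / δ ≤ y * z ^ (p - 1) := by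
    rw [div_le_iff₀ hδ0]
    calc z ^ (q₀ - 1) - z ^ p ≤ δ * z ^ (p - 1) + (1 - δ) * z ^ p - z ^ p := by linarith
      _ = δ * (z ^ (p - 1) - z ^ (p - 1) * z) := by rw [← hsplit]; ring
      _ = y * z ^ (p - 1) * δ := by rw [hz]; ring
  have h2 : y * z ^ (p - 1) ≤ (1 - y ^ p - z ^ p) / p := by
    rw [le_div_iff₀ (by linarith : (0:ℝ) < p)]
    nlinarith [hkey]
  linarith
end

section
/- Let ψ : (0, 1) → [0, ∞) satisfy: x ↦ x·ψ(x) is nondecreasing on (0,1), and x ↦ (1 − x)·ψ(x) is nonincreasing on (0,1). Then ψ is continuous on (0,1), and either ψ is identically zero or ψ(x) > 0 for every x ∈ (0,1). -/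
theorem stmt_8 (ψ : ℝ → ℝ)
    (hnonneg : ∀ x ∈ Set.Ioo (0:ℝ) 1, 0 ≤ ψ x)
    (hmono : ∀ x ∈ Set.Ioo (0:ℝ) 1, ∀ y ∈ Set.Ioo (0:ℝ) 1, x ≤ y →
      x * ψ x ≤ y * ψ y)
    (hanti : ∀ x ∈ Set.Ioo (0:ℝ) 1, ∀ y ∈ Set.Ioo (0:ℝ) 1, x ≤ y →
      (1 - y) * ψ y ≤ (1 - x) * ψ x) :
    ContinuousOn ψ (Set.Ioo (0:ℝ) 1) ∧
      ((∀ x ∈ Set.Ioo (0:ℝ) 1, ψ x = 0) ∨ (∀ x ∈ Set.Ioo (0:ℝ) 1, 0 < ψ x)) := by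
  have key : ∀ t ∈ Set.Ioo (0:ℝ) 1, ∀ s ∈ Set.Ioo (0:ℝ) 1,
      min ((1-t)/(1-s)) (t/s) * ψ t ≤ ψ s ∧
        ψ s ≤ max ((1-t)/(1-s)) (t/s) * ψ t := by
    intro t ht s hs
    obtain ⟨ht0, ht1⟩ := ht
    obtain ⟨hs0, hs1⟩ := hs
    have hψt := hnonneg t ⟨ht0, ht1⟩
    rcases le_total s t with h | h
    · have h1 := hmono s ⟨hs0, hs1⟩ t ⟨ht0, ht1⟩ h
      have h2 := hanti s ⟨hs0, hs1⟩ t ⟨ht0, ht1⟩ h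
      constructor
      · calc min ((1-t)/(1-s)) (t/s) * ψ t ≤ (1-t)/(1-s) * ψ t :=
              mul_le_mul_of_nonneg_right (min_le_left _ _) hψt
          _ ≤ ψ s := by
              rw [div_mul_eq_mul_div, div_le_iff₀ (by linarith)]; nlinarith
      · calc ψ s ≤ t/s * ψ t := by
              rw [div_mul_eq_mul_div, le_div_iff₀ hs0]; nlinarith
          _ ≤ max ((1-t)/(1-s)) (t/s) * ψ t :=
              mul_le_mul_of_nonneg_right (le_max_right _ _) hψt
    · have h1 := hmono t ⟨ht0, ht1⟩ s ⟨hs0, hs1⟩ h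
      have h2 := hanti t ⟨ht0, ht1⟩ s ⟨hs0, hs1⟩ h
      constructor
      · calc min ((1-t)/(1-s)) (t/s) * ψ t ≤ t/s * ψ t :=
              mul_le_mul_of_nonneg_right (min_le_right _ _) hψt
          _ ≤ ψ s := by rw [div_mul_eq_mul_div, div_le_iff₀ hs0]; nlinarith
      · calc ψ s ≤ (1-t)/(1-s) * ψ t := by
              rw [div_mul_eq_mul_div, le_div_iff₀ (by linarith)]; nlinarith
          _ ≤ max ((1-t)/(1-s)) (t/s) * ψ t :=
              mul_le_mul_of_nonneg_right (le_max_left _ _) hψt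
  constructor
  · intro t ht
    obtain ⟨ht0, ht1⟩ := ht
    have hA : ContinuousAt (fun s : ℝ => (1-t)/(1-s)) t :=
      ContinuousAt.div continuousAt_const (by fun_prop) (by linarith)
    have hB : ContinuousAt (fun s : ℝ => t/s) t :=
      ContinuousAt.div continuousAt_const continuousAt_id (by linarith)
    have hcratio : ContinuousAt (fun s : ℝ => min ((1-t)/(1-s)) (t/s)) t := hA.min hB
    have hcratio' : ContinuousAt (fun s : ℝ => max ((1-t)/(1-s)) (t/s)) t := hA.max hB
    have hval : min ((1-t)/(1-t)) (t/t) = 1 := by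
      rw [div_self (by linarith), div_self (by linarith), min_self]
    have hval' : max ((1-t)/(1-t)) (t/t) = 1 := by
      rw [div_self (by linarith), div_self (by linarith), max_self]
    have hl : Filter.Tendsto (fun s => min ((1-t)/(1-s)) (t/s) * ψ t)
        (nhdsWithin t (Set.Ioo (0:ℝ) 1)) (nhds (ψ t)) := by
      have := (hcratio.mul (continuousAt_const (y := ψ t))).continuousWithinAt
        (s := Set.Ioo (0:ℝ) 1)
      simpa [ContinuousWithinAt, hval, Pi.mul_def] using this
    have hu : Filter.Tendsto (fun s => max ((1-t)/(1-s)) (t/s) * ψ t)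
        (nhdsWithin t (Set.Ioo (0:ℝ) 1)) (nhds (ψ t)) := by
      have := (hcratio'.mul (continuousAt_const (y := ψ t))).continuousWithinAt
        (s := Set.Ioo (0:ℝ) 1)
      simpa [ContinuousWithinAt, hval', Pi.mul_def] using this
    refine tendsto_of_tendsto_of_tendsto_of_le_of_le' hl hu ?_ ?_
    · filter_upwards [self_mem_nhdsWithin] with s hs
      exact (key t ⟨ht0, ht1⟩ s hs).1
    · filter_upwards [self_mem_nhdsWithin] with s hs
      exact (key t ⟨ht0, ht1⟩ s hs).2
  · by_cases hz : ∃ x₀ ∈ Set.Ioo (0:ℝ) 1, ψ x₀ = 0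
    · left
      obtain ⟨x₀, hx₀, hψx₀⟩ := hz
      intro x hx
      refine le_antisymm ?_ (hnonneg x hx)
      rcases le_total x x₀ with h | h
      · have := hmono x hx x₀ hx₀ h
        rw [hψx₀] at this
        nlinarith [hx.1]
      · have := hanti x₀ hx₀ x hx h
        rw [hψx₀] at this
        nlinarith [hx.2]
    · right
      push_neg at hz
      intro x hx
      exact lt_of_le_of_ne (hnonneg x hx) (Ne.symm (hz x hx))
end

section
/- Let S be a random closed subset of ℝ and fix 0 < H < 1. Suppose for every ε > 0 there is δ₀ > 0 such that for all x ∈ ℝ and all 0 < δ < δ₀, P(S ∩ B(x, δ) ≠ ∅) < δ^{(1−H)−ε}. Then almost surely the Hausdorff dimension of S is at most H. -/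
open MeasureTheory Metric Set Filter ENNReal

lemma core12 {Ω : Type*} [MeasurableSpace Ω] (μ : Measure Ω)
    [IsProbabilityMeasure μ] (H ε : ℝ) (hH0 : 0 < H) (hε : 0 < ε)
    (S : Ω → Set ℝ)
    (hmeas : ∀ (x δ : ℝ), MeasurableSet {ω | (S ω ∩ Metric.closedBall x δ).Nonempty})
    (δ₀ : ℝ) (hδ₀ : 0 < δ₀)
    (hb : ∀ (x δ : ℝ), 0 < δ → δ < δ₀ →
      μ {ω | (S ω ∩ Metric.closedBall x δ).Nonempty} ≤ ENNReal.ofReal (δ ^ ((1 - H) - ε)))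
    (M : ℝ) (hM : 0 < M) :
    ∀ᵐ ω ∂μ, μH[H + 2*ε] (S ω ∩ Set.Icc (-M) M) = 0 := by
  classical
  set s : ℝ := H + 2*ε with hs
  have hs0 : 0 < s := by positivity
  -- scales
  set δ : ℕ → ℝ := fun n => δ₀ * (1/2 : ℝ)^(n+1) with hδdef
  have hδpos : ∀ n, 0 < δ n := fun n => by positivity
  have hδlt : ∀ n, δ n < δ₀ := by
    intro n
    have h : (1/2:ℝ)^(n+1) < 1 := pow_lt_one₀ (by norm_num) (by norm_num) (Nat.succ_ne_zero n)
    calc δ₀ * (1/2:ℝ)^(n+1) < δ₀ * 1 := mul_lt_mul_of_pos_left h hδ₀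
      _ = δ₀ := mul_one _
  -- number of intervals and centers
  set K : ℕ → ℕ := fun n => ⌊2*M / δ n⌋₊ + 1 with hK
  set c : ℕ → ℕ → ℝ := fun n i => -M + i * δ n with hc
  -- the random sums
  set A : ℕ → ℕ → Set Ω := fun n i => {ω | (S ω ∩ Metric.closedBall (c n i) (δ n)).Nonempty} with hA
  set v : ℕ → ℝ≥0∞ := fun n => ENNReal.ofReal ((2 * δ n) ^ s) with hv
  set X : ℕ → Ω → ℝ≥0∞ := fun n ω => ∑ i : Fin (K n), (A n i).indicator (fun _ => v n) ω with hX
  have hXmeas : ∀ n, Measurable (X n) := by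
    intro n
    exact Finset.measurable_sum _ fun i _ => Measurable.indicator measurable_const (hmeas _ _)
  -- expectation bound
  set q : ℝ := (1/2:ℝ) ^ ε with hq
  have hq0 : 0 < q := by positivity
  have hq1 : q < 1 := by
    rw [hq]
    exact Real.rpow_lt_one (by norm_num) (by norm_num) hε
  set C : ℝ := (2*M + δ₀) * 2 ^ s * δ₀ ^ ε with hC
  have hC0 : 0 < C := by positivity
  have hEX : ∀ n, ∫⁻ ω, X n ω ∂μ ≤ ENNReal.ofReal (C * q^(n+1)) := by
    intro n
    have h1 : ∫⁻ ω, X n ω ∂μ = ∑ i : Fin (K n), v n * μ (A n i) := by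
      rw [hX]
      rw [lintegral_finset_sum]
      · exact Finset.sum_congr rfl fun i _ => lintegral_indicator_const (hmeas _ _) _
      · exact fun i _ => Measurable.indicator measurable_const (hmeas _ _)
    rw [h1]
    have h2 : ∀ i : Fin (K n), v n * μ (A n i)
        ≤ ENNReal.ofReal ((2 * δ n) ^ s * (δ n) ^ ((1-H) - ε)) := by
      intro i
      rw [ENNReal.ofReal_mul (by positivity)]
      exact mul_le_mul_right (hb _ _ (hδpos n) (hδlt n)) _
    calc ∑ i : Fin (K n), v n * μ (A n i)
        ≤ ∑ _i : Fin (K n), ENNReal.ofReal ((2 * δ n) ^ s * (δ n) ^ ((1-H) - ε)) :=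
          Finset.sum_le_sum fun i _ => h2 i
      _ = (K n : ℝ≥0∞) * ENNReal.ofReal ((2 * δ n) ^ s * (δ n) ^ ((1-H) - ε)) := by
          rw [Finset.sum_const, Finset.card_univ, Fintype.card_fin, nsmul_eq_mul]
      _ = ENNReal.ofReal ((K n : ℝ) * ((2 * δ n) ^ s * (δ n) ^ ((1-H) - ε))) := by
          rw [← ENNReal.ofReal_natCast (K n), ← ENNReal.ofReal_mul (by positivity)]
      _ ≤ ENNReal.ofReal (C * q^(n+1)) := by
          apply ENNReal.ofReal_le_ofReal
          have hδn := hδpos n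
          have hKle : (K n : ℝ) ≤ (2*M + δ₀) / δ n := by
            rw [hK]
            push_cast
            have h3 : (⌊2*M / δ n⌋₊ : ℝ) ≤ 2*M / δ n := Nat.floor_le (by positivity)
            have h4 : (1:ℝ) ≤ δ₀ / δ n := (one_le_div hδn).2 (hδlt n).le
            calc (⌊2*M / δ n⌋₊ : ℝ) + 1 ≤ 2*M / δ n + δ₀ / δ n := by linarith
              _ = (2*M + δ₀) / δ n := by ring
          have hrw : (2 * δ n) ^ s * (δ n) ^ ((1-H) - ε) = 2 ^ s * (δ n ^ (1 + ε)) := by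
            rw [Real.mul_rpow (by norm_num) hδn.le, mul_assoc,
              ← Real.rpow_add hδn]
            ring_nf
            rw [hs]; ring_nf
          have key : (K n : ℝ) * ((2 * δ n) ^ s * (δ n) ^ ((1-H) - ε))
              ≤ (2*M + δ₀) * 2 ^ s * (δ n ^ ε) := by
            rw [hrw]
            have h5 : δ n ^ (1 + ε) = δ n * δ n ^ ε := by
              rw [Real.rpow_add hδn, Real.rpow_one]
            calc (K n : ℝ) * (2 ^ s * (δ n ^ (1 + ε)))
                ≤ ((2*M + δ₀) / δ n) * (2 ^ s * (δ n ^ (1 + ε))) :=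
                  mul_le_mul_of_nonneg_right hKle (by positivity)
              _ = (2*M + δ₀) * 2 ^ s * (δ n ^ ε) := by
                  rw [h5]; field_simp
          refine key.trans (le_of_eq ?_)
          have h7 : δ n ^ ε = δ₀ ^ ε * q ^ (n+1) := by
            rw [hδdef, hq]
            rw [Real.mul_rpow hδ₀.le (by positivity), ← Real.rpow_natCast ((1/2:ℝ)) (n+1),
              ← Real.rpow_natCast ((1/2:ℝ)^ε) (n+1), ← Real.rpow_mul (by norm_num),
              ← Real.rpow_mul (by norm_num)]
            ring_nf
          rw [h7, hC]; ring
  -- total expectation is finite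
  have hsumE : ∫⁻ ω, ∑' n, X n ω ∂μ < ∞ := by
    rw [lintegral_tsum (fun n => (hXmeas n).aemeasurable)]
    have hsummable : Summable (fun n : ℕ => C * q^(n+1)) := by
      have : Summable (fun n : ℕ => (C*q) * q^n) :=
        (summable_geometric_of_lt_one hq0.le hq1).mul_left _
      refine this.congr fun n => by ring
    calc ∑' n, ∫⁻ ω, X n ω ∂μ ≤ ∑' n, ENNReal.ofReal (C * q^(n+1)) :=
          ENNReal.tsum_le_tsum hEX
      _ = ENNReal.ofReal (∑' n, C * q^(n+1)) :=
          (ENNReal.ofReal_tsum_of_nonneg (fun n => by positivity) hsummable).symm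
      _ < ∞ := ENNReal.ofReal_lt_top
  have hae : ∀ᵐ ω ∂μ, ∑' n, X n ω < ∞ :=
    ae_lt_top (Measurable.ennreal_tsum hXmeas) hsumE.ne
  filter_upwards [hae] with ω hω
  -- X n ω → 0
  have hX0 : Tendsto (fun n => X n ω) atTop (nhds 0) :=
    ENNReal.tendsto_atTop_zero_of_tsum_ne_top hω.ne
  -- covering sets
  set t : ∀ n : ℕ, Fin (K n) → Set ℝ := fun n i =>
    if (S ω ∩ Metric.closedBall (c n i) (δ n)).Nonempty
      then Metric.closedBall (c n i) (δ n) else ∅ with ht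
  have hr0 : Tendsto (fun n : ℕ => ENNReal.ofReal (2 * δ n)) atTop (nhds 0) := by
    rw [show (0:ℝ≥0∞) = ENNReal.ofReal 0 by simp]
    apply ENNReal.tendsto_ofReal
    have hg : Tendsto (fun n : ℕ => (1/2:ℝ)^n) atTop (nhds 0) :=
      tendsto_pow_atTop_nhds_zero_of_lt_one (by norm_num) (by norm_num)
    have : Tendsto (fun n : ℕ => (2*δ₀*(1/2:ℝ)) * (1/2:ℝ)^n) atTop (nhds ((2*δ₀*(1/2:ℝ)) * 0)) :=
      hg.const_mul _
    rw [mul_zero] at this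
    refine this.congr fun n => ?_
    rw [hδdef]; ring
  have hcov : μH[s] (S ω ∩ Set.Icc (-M) M)
      ≤ liminf (fun n => ∑ i : Fin (K n), (EMetric.diam (t n i)) ^ s) atTop := by
    apply MeasureTheory.Measure.hausdorffMeasure_le_liminf_sum s _ (fun n => ENNReal.ofReal (2 * δ n)) hr0 t
    · -- diameters
      filter_upwards with n
      intro i
      simp only [ht]
      split_ifs with h
      · apply EMetric.diam_le
        intro x hx y hy
        rw [edist_dist]
        apply ENNReal.ofReal_le_ofReal
        calc dist x y ≤ dist x (c n i) + dist (c n i) y := dist_triangle _ _ _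
          _ ≤ δ n + δ n := add_le_add (Metric.mem_closedBall.1 hx)
              (by rw [dist_comm]; exact Metric.mem_closedBall.1 hy)
          _ = 2 * δ n := by ring
      · simp
    · -- covering
      filter_upwards with n
      intro x hx
      obtain ⟨hxS, hxI⟩ := hx
      have hxnn : (0:ℝ) ≤ x + M := by linarith [hxI.1]
      set j : ℕ := ⌊(x + M) / δ n⌋₊ with hj
      have hjle : (j : ℝ) ≤ (x + M) / δ n := Nat.floor_le (by positivity)
      have hjgt : (x + M) / δ n < j + 1 := Nat.lt_floor_add_one _
      have hjK : j < K n := by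
        have hjm : j ≤ ⌊2*M / δ n⌋₊ := by
          apply Nat.floor_mono
          gcongr
          linarith [hxI.2]
        simp only [hK]
        omega
      refine Set.mem_iUnion.2 ⟨⟨j, hjK⟩, ?_⟩
      have hxball : x ∈ Metric.closedBall (c n j) (δ n) := by
        rw [Metric.mem_closedBall]
        simp only [hc]
        rw [Real.dist_eq, abs_le]
        have hmul1 : (j:ℝ) * δ n ≤ x + M := (le_div_iff₀ (hδpos n)).1 hjle
        have hmul2 : x + M < ((j:ℝ)+1) * δ n := (div_lt_iff₀ (hδpos n)).1 hjgt
        constructor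
        · linarith [hδpos n]
        · linarith [hδpos n]
      have hne : (S ω ∩ Metric.closedBall (c n j) (δ n)).Nonempty := ⟨x, hxS, hxball⟩
      simp only [ht, hne, if_true]
      exact hxball
  -- sum bounded by X n ω
  have hsle : ∀ n, ∑ i : Fin (K n), (EMetric.diam (t n i)) ^ s ≤ X n ω := by
    intro n
    rw [hX]
    apply Finset.sum_le_sum
    intro i _
    simp only [ht]
    split_ifs with h
    · have h8 : EMetric.diam (Metric.closedBall (c n i) (δ n)) ≤ ENNReal.ofReal (2 * δ n) := by
        apply EMetric.diam_le
        intro x hx y hy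
        rw [edist_dist]
        apply ENNReal.ofReal_le_ofReal
        calc dist x y ≤ dist x (c n i) + dist (c n i) y := dist_triangle _ _ _
          _ ≤ δ n + δ n := add_le_add (Metric.mem_closedBall.1 hx)
              (by rw [dist_comm]; exact Metric.mem_closedBall.1 hy)
          _ = 2 * δ n := by ring
      have h9 : ω ∈ A n i := h
      rw [Set.indicator_of_mem h9]
      simp only [hv]
      rw [← ENNReal.ofReal_rpow_of_pos (by positivity)]
      exact ENNReal.rpow_le_rpow h8 hs0.le
    · rw [show EMetric.diam (∅ : Set ℝ) = 0 from EMetric.diam_empty, ENNReal.zero_rpow_of_pos hs0]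
      exact zero_le
  have hliminf : liminf (fun n => ∑ i : Fin (K n), (EMetric.diam (t n i)) ^ s) atTop = 0 := by
    have hle : liminf (fun n => ∑ i : Fin (K n), (EMetric.diam (t n i)) ^ s) atTop
        ≤ liminf (fun n => X n ω) atTop :=
      liminf_le_liminf (Eventually.of_forall hsle)
    rw [hX0.liminf_eq] at hle
    exact le_antisymm hle zero_le
  rw [hliminf] at hcov
  exact le_antisymm hcov zero_le

theorem stmt_12 {Ω : Type*} [MeasurableSpace Ω] (μ : Measure Ω)
    [IsProbabilityMeasure μ] (H : ℝ) (hH0 : 0 < H) (hH1 : H < 1)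
    (S : Ω → Set ℝ) (hclosed : ∀ ω, IsClosed (S ω))
    (hmeas : ∀ (x δ : ℝ), MeasurableSet {ω | (S ω ∩ Metric.closedBall x δ).Nonempty})
    (hbound : ∀ ε > (0:ℝ), ∃ δ₀ > (0:ℝ), ∀ (x : ℝ) (δ : ℝ), 0 < δ → δ < δ₀ →
      μ {ω | (S ω ∩ Metric.closedBall x δ).Nonempty} < ENNReal.ofReal (δ ^ ((1 - H) - ε))) :
    ∀ᵐ ω ∂μ, dimH (S ω) ≤ ENNReal.ofReal H := by
  have key : ∀ k M : ℕ, ∀ᵐ ω ∂μ,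
      μH[H + 2*(1/((k:ℝ)+1))] (S ω ∩ Set.Icc (-((M:ℝ)+1)) ((M:ℝ)+1)) = 0 := by
    intro k M
    obtain ⟨δ₀, hδ₀, hb⟩ := hbound (1/((k:ℝ)+1)) (by positivity)
    exact core12 μ H _ hH0 (by positivity) S hmeas δ₀ hδ₀
      (fun x d hd hd' => (hb x d hd hd').le) ((M:ℝ)+1) (by positivity)
  have key2 : ∀ᵐ ω ∂μ, ∀ k M : ℕ,
      μH[H + 2*(1/((k:ℝ)+1))] (S ω ∩ Set.Icc (-((M:ℝ)+1)) ((M:ℝ)+1)) = 0 := by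
    rw [ae_all_iff]
    intro k
    rw [ae_all_iff]
    exact key k
  filter_upwards [key2] with ω hω
  have hcover : S ω = ⋃ M : ℕ, S ω ∩ Set.Icc (-((M:ℝ)+1)) ((M:ℝ)+1) := by
    ext x
    simp only [Set.mem_iUnion, Set.mem_inter_iff, Set.mem_Icc]
    constructor
    · intro hx
      obtain ⟨M, hMx⟩ := exists_nat_ge |x|
      refine ⟨M, hx, ?_, ?_⟩
      · linarith [neg_abs_le x]
      · linarith [le_abs_self x]
    · rintro ⟨M, hx, -⟩
      exact hx
  rw [hcover, dimH_iUnion]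
  apply iSup_le
  intro M
  apply ENNReal.le_of_forall_pos_le_add
  intro ε' hε' _
  obtain ⟨k, hk⟩ := exists_nat_one_div_lt (show (0:ℝ) < (ε':ℝ)/2 by positivity)
  have h1 : dimH (S ω ∩ Set.Icc (-((M:ℝ)+1)) ((M:ℝ)+1))
      ≤ ENNReal.ofReal (H + 2*(1/((k:ℝ)+1))) := by
    have hz := hω k M
    set d : NNReal := (H + 2*(1/((k:ℝ)+1))).toNNReal with hdd
    have hcoe : (d : ℝ) = H + 2*(1/((k:ℝ)+1)) := Real.coe_toNNReal _ (by positivity)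
    have hd : μH[(d : ℝ)] (S ω ∩ Set.Icc (-((M:ℝ)+1)) ((M:ℝ)+1)) ≠ ∞ := by
      rw [hcoe, hz]
      exact ENNReal.zero_ne_top
    have h2 := dimH_le_of_hausdorffMeasure_ne_top hd
    rw [ENNReal.ofReal, ← hdd]
    exact h2
  refine h1.trans ?_
  calc ENNReal.ofReal (H + 2*(1/((k:ℝ)+1)))
      ≤ ENNReal.ofReal H + ENNReal.ofReal (2*(1/((k:ℝ)+1))) := ENNReal.ofReal_add_le
    _ ≤ ENNReal.ofReal H + ε' := by
        apply add_le_add_right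
        rw [← ENNReal.ofReal_coe_nnreal]
        apply ENNReal.ofReal_le_ofReal
        linarith
end
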